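/- arXiv:1907.09101 — 5 statements merged into one kernel-verified Lean document; each statement's English description precedes it below -/
import Mathlib

section
/- The agent-nonrepeating formula (◇_a(p ∨ ¬p) ∧ □_a p) → p is a theorem of KB5 but not a theorem of KD. Hence KB5 restricted to agent-nonrepeating formulas is not contained in KD restricted to agent-nonrepeating formulas. -/
/-- Formulas of the multi-agent modal language: p | ¬φ | (φ ∧ φ) | □_a φ. -/
inductive Fm (A : Type) : Type
  | atom : ℕ → Fm A
  | neg : Fm A → Fm A
  | and : Fm A → Fm A → Fm A
  | box : A → Fm A → Fm A

namespace Fm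
def imp {A : Type} (φ ψ : Fm A) : Fm A := .neg (.and φ (.neg ψ))
def or {A : Type} (φ ψ : Fm A) : Fm A := .neg (.and (.neg φ) (.neg ψ))
def dia {A : Type} (a : A) (φ : Fm A) : Fm A := .neg (.box a (.neg φ))
end Fm

/-- Kripke models with agent set `A` and world type `W`. -/
structure Kripke (A W : Type) where
  R : A → W → W → Prop
  V : ℕ → W → Prop

/-- Satisfaction. -/
def Sat {A W : Type} (M : Kripke A W) : W → Fm A → Prop
  | w, .atom n => M.V n w
  | w, .neg φ => ¬ Sat M w φ
  | w, .and φ ψ => Sat M w φ ∧ Sat M w ψ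
  | w, .box a φ => ∀ v, M.R a w v → Sat M v φ

/-- The fragments L_{-a}: φ ::= p | □_x ψ (x ≠ a, ψ ∈ L_{-x}) | ¬φ | (φ ∧ φ). -/
inductive LMinus {A : Type} : A → Fm A → Prop
  | atom (a : A) (n : ℕ) : LMinus a (.atom n)
  | box {a x : A} {ψ : Fm A} : x ≠ a → LMinus x ψ → LMinus a (.box x ψ)
  | neg {a : A} {φ : Fm A} : LMinus a φ → LMinus a (.neg φ)
  | and {a : A} {φ ψ : Fm A} : LMinus a φ → LMinus a ψ → LMinus a (.and φ ψ)

/-- The agent-alternating fragment L_alt. -/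
inductive LAlt {A : Type} : Fm A → Prop
  | atom (n : ℕ) : LAlt (.atom n)
  | chi {φ : Fm A} (a : A) : LMinus a φ → LAlt φ
  | neg {φ : Fm A} : LAlt φ → LAlt (.neg φ)
  | and {φ ψ : Fm A} : LAlt φ → LAlt ψ → LAlt (.and φ ψ)

/-- The fragments L_X for X ⊆ A: φ ::= p | □_x ψ (x ∈ X, ψ ∈ L_{X\{x}}) | ¬φ | (φ ∧ φ). -/
inductive LX {A : Type} : Set A → Fm A → Prop
  | atom (X : Set A) (n : ℕ) : LX X (.atom n)
  | box {X : Set A} {x : A} {ψ : Fm A} : x ∈ X → LX (X \ {x}) ψ → LX X (.box x ψ)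
  | neg {X : Set A} {φ : Fm A} : LX X φ → LX X (.neg φ)
  | and {X : Set A} {φ ψ : Fm A} : LX X φ → LX X ψ → LX X (.and φ ψ)

/-- Immediate subformula relation. -/
inductive ISub {A : Type} : Fm A → Fm A → Prop
  | neg (φ : Fm A) : ISub φ (.neg φ)
  | andL (φ ψ : Fm A) : ISub φ (.and φ ψ)
  | andR (φ ψ : Fm A) : ISub ψ (.and φ ψ)
  | box (a : A) (φ : Fm A) : ISub φ (.box a φ)

/-- An occurrence type of φ: a nonempty sequence of formulas, each an immediate
subformula of the next, ending in φ. -/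
def IsOcc {A : Type} (l : List (Fm A)) (φ : Fm A) : Prop :=
  l ≠ [] ∧ l.getLast? = some φ ∧ List.Chain' ISub l

/-- A □_a-occurrence of φ. -/
def IsBoxOcc {A : Type} (a : A) (l : List (Fm A)) (φ : Fm A) : Prop :=
  IsOcc l φ ∧ ∃ β, l.head? = some (Fm.box a β)

/-- O ≤ O' iff O' is a suffix of O (prefix-extension order on occurrences). -/
def OccLe {A : Type} (O O' : List (Fm A)) : Prop := O' <:+ O

/-- φ is agent-alternating: between any two nested □_a-occurrences there is a
□_b-occurrence for some b ≠ a. -/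
def AgentAlternating {A : Type} (φ : Fm A) : Prop :=
  ∀ (a : A) (O O' : List (Fm A)), IsBoxOcc a O φ → IsBoxOcc a O' φ → O ≠ O' → OccLe O O' →
    ∃ b : A, b ≠ a ∧ ∃ O'' : List (Fm A), IsBoxOcc b O'' φ ∧ OccLe O O'' ∧ OccLe O'' O'

/-- φ is agent-nonrepeating: no □_a-occurrence lies below another □_a-occurrence. -/
def AgentNonrepeating {A : Type} (φ : Fm A) : Prop :=
  ∀ (a : A) (O O' : List (Fm A)), IsBoxOcc a O φ → IsBoxOcc a O' φ → O ≠ O' → ¬ OccLe O O'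

/-- Boolean evaluation treating atoms and boxed formulas as atomic. -/
def evalP {A : Type} (v : Fm A → Bool) : Fm A → Bool
  | .neg φ => ! evalP v φ
  | .and φ ψ => evalP v φ && evalP v ψ
  | φ => v φ

/-- Propositional tautologies (in the signature ¬, ∧, with boxed formulas atomic). -/
def Taut {A : Type} (φ : Fm A) : Prop := ∀ v : Fm A → Bool, evalP v φ = true

/-- Provability in the smallest normal modal logic containing the axioms `Ax`. -/
inductive Prv {A : Type} (Ax : Fm A → Prop) : Fm A → Prop
  | taut {φ : Fm A} : Taut φ → Prv Ax φ
  | ax {φ : Fm A} : Ax φ → Prv Ax φ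
  | k (a : A) (φ ψ : Fm A) :
      Prv Ax (Fm.imp (.box a (Fm.imp φ ψ)) (Fm.imp (.box a φ) (.box a ψ)))
  | mp {φ ψ : Fm A} : Prv Ax (Fm.imp φ ψ) → Prv Ax φ → Prv Ax ψ
  | nec {φ : Fm A} (a : A) : Prv Ax φ → Prv Ax (.box a φ)

def AxNone {A : Type} : Fm A → Prop := fun _ => False
def AxT {A : Type} : Fm A → Prop := fun χ => ∃ (a : A) (φ : Fm A), χ = Fm.imp (.box a φ) φ
def Ax4 {A : Type} : Fm A → Prop := fun χ => ∃ (a : A) (φ : Fm A), χ = Fm.imp (.box a φ) (.box a (.box a φ))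
def Ax5 {A : Type} : Fm A → Prop := fun χ => ∃ (a : A) (φ : Fm A), χ = Fm.imp (.neg (.box a φ)) (.box a (.neg (.box a φ)))
def AxB {A : Type} : Fm A → Prop := fun χ => ∃ (a : A) (φ : Fm A), χ = Fm.imp φ (.box a (Fm.dia a φ))
def AxD {A : Type} : Fm A → Prop := fun χ => ∃ (a : A) (φ : Fm A), χ = Fm.imp (.box a φ) (Fm.dia a φ)

def Ser {W : Type} (R : W → W → Prop) : Prop := ∀ u, ∃ v, R u v
def Eucl {W : Type} (R : W → W → Prop) : Prop := ∀ u v w, R u v → R u w → R v w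

/-- Agent-alternating bisimulation family (`none` plays the role of `alt`). -/
def IsAAFamily {A W1 W2 : Type} (M : Kripke A W1) (N : Kripke A W2)
    (f : Option A → W1 → W2 → Prop) : Prop :=
  ∀ (o : Option A) (u : W1) (v : W2), f o u v →
    (∀ n, M.V n u ↔ N.V n v) ∧
    (∀ b : A, o ≠ some b →
      (∀ u', M.R b u u' → ∃ v', N.R b v v' ∧ f (some b) u' v') ∧
      (∀ v', N.R b v v' → ∃ u', M.R b u u' ∧ f (some b) u' v'))

/-- Agent-nonrepeating bisimulation family. -/
def IsNRFamily {A W1 W2 : Type} (M : Kripke A W1) (N : Kripke A W2)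
    (f : Set A → W1 → W2 → Prop) : Prop :=
  ∀ (X : Set A) (u : W1) (v : W2), f X u v →
    (∀ n, M.V n u ↔ N.V n v) ∧
    (∀ x ∈ X,
      (∀ u', M.R x u u' → ∃ v', N.R x v v' ∧ f (X \ {x}) u' v') ∧
      (∀ v', N.R x v v' → ∃ u', M.R x u u' ∧ f (X \ {x}) u' v'))

/-- One step in an agent-alternating sequence. -/
def Step {A W : Type} (M : Kripke A W) : (Option A × W) → (Option A × W) → Prop :=
  fun x y => x.1 ≠ y.1 ∧ ∃ b : A, y.1 = some b ∧ M.R b x.2 y.2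

/-- Valid worlds of an agent-alternating unraveling. -/
def ValidSeq {A W : Type} (M : Kripke A W) (s : List (Option A × W)) : Prop :=
  s ≠ [] ∧ (∃ w, s.head? = some (none, w)) ∧ (∀ x ∈ s.tail, x.1 ≠ none) ∧
    List.Chain' (Step M) s

def UWorld {A W : Type} (M : Kripke A W) : Type := {s : List (Option A × W) // ValidSeq M s}

def lastEntry {A W : Type} {M : Kripke A W} (s : UWorld M) : Option A × W :=
  s.val.getLast s.prop.1

/-- N is an agent-alternating unraveling of M. -/
def IsAAUnraveling {A W : Type} (M : Kripke A W) (N : Kripke A (UWorld M)) : Prop :=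
  (∀ (b : A) (s : UWorld M), (lastEntry s).1 ≠ some b →
    ∀ t : UWorld M, N.R b s t ↔ ∃ w', M.R b (lastEntry s).2 w' ∧ t.val = s.val ++ [(some b, w')])
  ∧ (∀ n (s : UWorld M), N.V n s ↔ M.V n (lastEntry s).2)

/-- The canonical relation family between M and any of its agent-alternating unravelings. -/
def PFam {A W : Type} (M : Kripke A W) : Option A → W → UWorld M → Prop :=
  fun o u s => lastEntry s = (o, u)

/-- Finite agent-alternating bisimulation relations: `BisimN M N n (some a)` is ⇆_{-a}^n,
`BisimN M N n none` is ⇆_alt^n. -/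
def BisimN {A W1 W2 : Type} (M : Kripke A W1) (N : Kripke A W2) :
    ℕ → Option A → W1 → W2 → Prop
  | 0, _, u, v => ∀ n, M.V n u ↔ N.V n v
  | (n+1), o, u, v => (∀ m, M.V m u ↔ N.V m v) ∧
      ∀ b : A, o ≠ some b →
        (∀ u', M.R b u u' → ∃ v', N.R b v v' ∧ BisimN M N n (some b) u' v') ∧
        (∀ v', N.R b v v' → ∃ u', M.R b u u' ∧ BisimN M N n (some b) u' v')

/-- Standard n-bisimilarity. -/
def StdBisimN {A W1 W2 : Type} (M : Kripke A W1) (N : Kripke A W2) :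
    ℕ → W1 → W2 → Prop
  | 0, u, v => ∀ n, M.V n u ↔ N.V n v
  | (n+1), u, v => (∀ m, M.V m u ↔ N.V m v) ∧
      ∀ b : A,
        (∀ u', M.R b u u' → ∃ v', N.R b v v' ∧ StdBisimN M N n u' v') ∧
        (∀ v', N.R b v v' → ∃ u', M.R b u u' ∧ StdBisimN M N n u' v')

/-!
Frames of KB5 are symmetric and Euclidean, so every world with a successor sees itself;
hence `◇_a ψ ∧ □_a p → p` is valid there. Syntactically: B applied to `□_a p` followed by
the contrapositive of 5 gives axiom 4, so `□_a p` yields `□_a □_a p`, while B applied to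
`¬p` yields `□_a ¬□_a p`; together they give `□_a ⊥`, refuting `◇_a ψ`. Seriality gives
no such reflexivity: in the two-world model where `false` sees only the `p`-world `true`,
the formula fails at `false`.
-/

namespace Prv

variable {A : Type} {Ax : Fm A → Prop}

theorem of_taut_imp {φ ψ : Fm A} (ht : Taut (Fm.imp φ ψ)) (h : Prv Ax φ) : Prv Ax ψ :=
  mp (taut ht) h

theorem of_taut_imp₃ {φ₁ φ₂ φ₃ ψ : Fm A}
    (ht : Taut (Fm.imp φ₁ (Fm.imp φ₂ (Fm.imp φ₃ ψ))))
    (h₁ : Prv Ax φ₁) (h₂ : Prv Ax φ₂) (h₃ : Prv Ax φ₃) : Prv Ax ψ :=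
  mp (mp (mp (taut ht) h₁) h₂) h₃

theorem imp_trans {φ ψ χ : Fm A} (h₁ : Prv Ax (Fm.imp φ ψ)) (h₂ : Prv Ax (Fm.imp ψ χ)) :
    Prv Ax (Fm.imp φ χ) := by
  refine mp (of_taut_imp ?_ h₁) h₂
  intro v
  simp only [Fm.imp, evalP]
  cases evalP v φ <;> cases evalP v ψ <;> cases evalP v χ <;> rfl

theorem neg_imp_comm {φ ψ : Fm A} (h : Prv Ax (Fm.imp (.neg φ) ψ)) :
    Prv Ax (Fm.imp (.neg ψ) φ) := by
  refine of_taut_imp ?_ h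
  intro v
  simp only [Fm.imp, evalP]
  cases evalP v φ <;> cases evalP v ψ <;> rfl

theorem neg_imp_neg {φ ψ : Fm A} (h : Prv Ax (Fm.imp φ ψ)) :
    Prv Ax (Fm.imp (.neg ψ) (.neg φ)) := by
  refine of_taut_imp ?_ h
  intro v
  simp only [Fm.imp, evalP]
  cases evalP v φ <;> cases evalP v ψ <;> rfl

theorem box_mono (a : A) {φ ψ : Fm A} (h : Prv Ax (Fm.imp φ ψ)) :
    Prv Ax (Fm.imp (.box a φ) (.box a ψ)) :=
  mp (k a φ ψ) (nec a h)

theorem box_imp_box_neg_imp_box (a : A) (φ ψ : Fm A) :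
    Prv Ax (Fm.imp (.box a φ) (Fm.imp (.box a (.neg φ)) (.box a ψ))) := by
  have hexfalso : Prv Ax (Fm.imp φ (Fm.imp (.neg φ) ψ)) := by
    refine taut fun v => ?_
    simp only [Fm.imp, evalP]
    cases evalP v φ <;> cases evalP v ψ <;> rfl
  exact imp_trans (box_mono a hexfalso) (k a (.neg φ) ψ)

theorem neg_imp_box_neg_box (hB : ∀ χ, AxB χ → Ax χ) (a : A) (φ : Fm A) :
    Prv Ax (Fm.imp (.neg φ) (.box a (.neg (.box a φ)))) := by
  have hdn : Prv Ax (Fm.imp φ (.neg (.neg φ))) := by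
    refine taut fun v => ?_
    simp only [Fm.imp, evalP]
    cases evalP v φ <;> rfl
  exact imp_trans (ax (hB _ ⟨a, .neg φ, rfl⟩)) (box_mono a (neg_imp_neg (box_mono a hdn)))

theorem box_imp_box_box (hB : ∀ χ, AxB χ → Ax χ) (h5 : ∀ χ, Ax5 χ → Ax χ)
    (a : A) (φ : Fm A) :
    Prv Ax (Fm.imp (.box a φ) (.box a (.box a φ))) :=
  imp_trans (ax (hB _ ⟨a, .box a φ, rfl⟩))
    (box_mono a (neg_imp_comm (ax (h5 _ ⟨a, φ, rfl⟩))))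

theorem dia_and_box_imp (hB : ∀ χ, AxB χ → Ax χ) (h5 : ∀ χ, Ax5 χ → Ax χ)
    (a : A) (φ ψ : Fm A) :
    Prv Ax (Fm.imp (.and (Fm.dia a ψ) (.box a φ)) φ) := by
  refine of_taut_imp₃ ?_ (box_imp_box_box hB h5 a φ) (neg_imp_box_neg_box hB a φ)
    (box_imp_box_neg_imp_box a (.box a φ) (.neg ψ))
  intro v
  simp only [Fm.imp, Fm.dia, evalP]
  cases evalP v φ <;> cases v (.box a φ) <;> cases v (.box a (.box a φ)) <;>
    cases v (.box a (.neg (.box a φ))) <;> cases v (.box a (.neg ψ)) <;> rfl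

end Prv

section Soundness

variable {A W : Type} (M : Kripke A W)

theorem sat_imp (w : W) (φ ψ : Fm A) :
    Sat M w (Fm.imp φ ψ) ↔ (Sat M w φ → Sat M w ψ) := by
  simp only [Fm.imp, Sat, not_and, not_not]

theorem sat_dia (w : W) (a : A) (φ : Fm A) :
    Sat M w (Fm.dia a φ) ↔ ∃ v, M.R a w v ∧ Sat M v φ := by
  simp only [Fm.dia, Sat, not_forall, not_not, exists_prop]

open Classical in
theorem sat_iff_evalP (w : W) (φ : Fm A) :
    Sat M w φ ↔ evalP (fun χ => decide (Sat M w χ)) φ = true := by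
  induction φ with
  | atom n => exact decide_eq_true_iff.symm
  | neg φ ih => simp [evalP, Sat, ih]
  | and φ ψ ihφ ihψ => simp only [evalP, Sat, ihφ, ihψ, Bool.and_eq_true]
  | box a φ => simp only [evalP, decide_eq_true_eq]

theorem Taut.sat {φ : Fm A} (h : Taut φ) (w : W) : Sat M w φ := by
  classical
  exact (sat_iff_evalP M w φ).2 (h _)

theorem Prv.sat {Ax : Fm A → Prop} (hAx : ∀ χ, Ax χ → ∀ w, Sat M w χ) {φ : Fm A}
    (h : Prv Ax φ) (w : W) : Sat M w φ := by
  induction h generalizing w with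
  | taut ht => exact ht.sat M w
  | ax hχ => exact hAx _ hχ w
  | k a φ ψ =>
    simp only [sat_imp, Sat]
    exact fun himp hφ v hv => himp v hv (hφ v hv)
  | mp _ _ ihimp ih => exact (sat_imp M w _ _).1 (ihimp w) (ih w)
  | nec a _ ih => exact fun v _ => ih v

theorem sat_axD_of_serial (hser : ∀ a, Ser (M.R a)) {χ : Fm A} (hχ : AxD χ) (w : W) :
    Sat M w χ := by
  obtain ⟨a, φ, rfl⟩ := hχ
  obtain ⟨v, hv⟩ := hser a w
  simp only [sat_imp, sat_dia]
  exact fun hbox => ⟨v, hv, hbox v hv⟩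

end Soundness

def serialCountermodel (A : Type) : Kripke A Bool where
  R _ _ v := v = true
  V _ w := w = true

theorem not_prv_axD_dia_and_box_imp {A : Type} (a : A) (n : ℕ) {ψ : Fm A} (hψ : Taut ψ) :
    ¬ Prv AxD (Fm.imp (.and (Fm.dia a ψ) (.box a (.atom n))) (.atom n)) := by
  intro h
  have hser : ∀ b, Ser ((serialCountermodel A).R b) := fun _ _ => ⟨true, rfl⟩
  have hfalse := h.sat _ (fun _ => sat_axD_of_serial _ hser) false
  simp only [sat_imp, Sat, sat_dia, serialCountermodel] at hfalse
  exact Bool.false_ne_true (hfalse ⟨⟨true, rfl, hψ.sat _ true⟩, fun _ => id⟩)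

theorem taut_or_neg {A : Type} (φ : Fm A) : Taut (Fm.or φ (.neg φ)) := by
  intro v
  simp only [Fm.or, evalP]
  cases evalP v φ <;> rfl

theorem stmt11_general {A : Type} (a : A) :
    LX (Set.univ : Set A)
      (Fm.imp (.and (Fm.dia a (Fm.or (.atom 0) (.neg (.atom 0)))) (.box a (.atom 0)))
        (.atom 0)) ∧
    Prv (fun χ => AxB χ ∨ Ax5 χ)
      (Fm.imp (.and (Fm.dia a (Fm.or (.atom 0) (.neg (.atom 0)))) (.box a (.atom 0)))
        (.atom 0)) ∧
    ¬ Prv AxD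
      (Fm.imp (.and (Fm.dia a (Fm.or (.atom 0) (.neg (.atom 0)))) (.box a (.atom 0)))
        (.atom 0)) ∧
    ∃ φ : Fm A, LX (Set.univ : Set A) φ ∧ Prv (fun χ => AxB χ ∨ Ax5 χ) φ ∧
      ¬ Prv AxD φ := by
  have hLX : LX (Set.univ : Set A)
      (Fm.imp (.and (Fm.dia a (Fm.or (.atom 0) (.neg (.atom 0)))) (.box a (.atom 0)))
        (.atom 0)) := by
    repeat' first | exact LX.box (Set.mem_univ a) ?_ | constructor
  have hKB5 := Prv.dia_and_box_imp (Ax := fun χ => AxB χ ∨ Ax5 χ) (fun _ => Or.inl)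
    (fun _ => Or.inr) a (.atom 0) (Fm.or (.atom 0) (.neg (.atom 0)))
  have hKD := not_prv_axD_dia_and_box_imp a 0 (taut_or_neg (.atom 0))
  exact ⟨hLX, hKB5, hKD, _, hLX, hKB5, hKD⟩

/-- (◇_a(p ∨ ¬p) ∧ □_a p) → p is agent-nonrepeating, a theorem of KB5, and not
a theorem of KD; hence KB5|_nr ⊄ KD|_nr. -/
theorem stmt11 {A : Type} (hA : ∃ x y : A, x ≠ y) (a : A) :
    LX (Set.univ : Set A)
      (Fm.imp (.and (Fm.dia a (Fm.or (.atom 0) (.neg (.atom 0)))) (.box a (.atom 0)))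
        (.atom 0)) ∧
    Prv (fun χ => AxB χ ∨ Ax5 χ)
      (Fm.imp (.and (Fm.dia a (Fm.or (.atom 0) (.neg (.atom 0)))) (.box a (.atom 0)))
        (.atom 0)) ∧
    ¬ Prv AxD
      (Fm.imp (.and (Fm.dia a (Fm.or (.atom 0) (.neg (.atom 0)))) (.box a (.atom 0)))
        (.atom 0)) ∧
    ∃ φ : Fm A, LX (Set.univ : Set A) φ ∧ Prv (fun χ => AxB χ ∨ Ax5 χ) φ ∧
      ¬ Prv AxD φ :=
  stmt11_general a
end

section
/- The formula (◇_a p ∧ ◇_a ¬p) → Ĉ(p ∧ Ĉ¬p), where Ĉ is the dual of the common belief operator C, is valid on all frames with Euclidean accessibility relations but is not valid on all frames with serial accessibility relations. Hence CK5 ∩ L_altC^p is not contained in CKD ∩ L_altC^p. -/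
/-- Formulas of the multi-agent modal language with common belief. -/
inductive CFm (A : Type) : Type
  | atom : ℕ → CFm A
  | neg : CFm A → CFm A
  | and : CFm A → CFm A → CFm A
  | box : A → CFm A → CFm A
  | cb : CFm A → CFm A

namespace CFm
def imp {A : Type} (φ ψ : CFm A) : CFm A := .neg (.and φ (.neg ψ))
def or {A : Type} (φ ψ : CFm A) : CFm A := .neg (.and (.neg φ) (.neg ψ))
def dia {A : Type} (a : A) (φ : CFm A) : CFm A := .neg (.box a (.neg φ))
def cdual {A : Type} (φ : CFm A) : CFm A := .neg (.cb (.neg φ))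
def bot {A : Type} : CFm A := .and (.atom 0) (.neg (.atom 0))
def verum {A : Type} : CFm A := .neg bot
def conj {A : Type} (l : List (CFm A)) : CFm A := l.foldr .and verum
end CFm

/-- Satisfaction; Cφ holds at u iff φ holds at all worlds reachable from u by the
transitive closure of the union of the accessibility relations. -/
def CSat {A W : Type} (M : Kripke A W) : W → CFm A → Prop
  | w, .atom n => M.V n w
  | w, .neg φ => ¬ CSat M w φ
  | w, .and φ ψ => CSat M w φ ∧ CSat M w ψ
  | w, .box a φ => ∀ v, M.R a w v → CSat M v φ
  | w, .cb φ => ∀ v, Relation.TransGen (fun x y => ∃ a : A, M.R a x y) w v → CSat M v φ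

/-- Formulas whose only modality is C. -/
inductive Conly {A : Type} : CFm A → Prop
  | atom (n : ℕ) : Conly (.atom n)
  | neg {φ : CFm A} : Conly φ → Conly (.neg φ)
  | and {φ ψ : CFm A} : Conly φ → Conly ψ → Conly (.and φ ψ)
  | cb {φ : CFm A} : Conly φ → Conly (.cb φ)

/-- C-free agent-alternating fragments L_{-a} (within the C language). -/
inductive PLMinus {A : Type} : A → CFm A → Prop
  | atom (a : A) (n : ℕ) : PLMinus a (.atom n)
  | box {a x : A} {ψ : CFm A} : x ≠ a → PLMinus x ψ → PLMinus a (.box x ψ)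
  | neg {a : A} {φ : CFm A} : PLMinus a φ → PLMinus a (.neg φ)
  | and {a : A} {φ ψ : CFm A} : PLMinus a φ → PLMinus a ψ → PLMinus a (.and φ ψ)

/-- C-free agent-alternating fragment L_alt (within the C language). -/
inductive PLAlt {A : Type} : CFm A → Prop
  | atom (n : ℕ) : PLAlt (.atom n)
  | chi {φ : CFm A} (a : A) : PLMinus a φ → PLAlt φ
  | neg {φ : CFm A} : PLAlt φ → PLAlt (.neg φ)
  | and {φ ψ : CFm A} : PLAlt φ → PLAlt ψ → PLAlt (.and φ ψ)

/-- L_alt C^p: Boolean combinations of agent-alternating formulas and C-only formulas. -/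
inductive LaltCp {A : Type} : CFm A → Prop
  | alt {φ : CFm A} : PLAlt φ → LaltCp φ
  | conly {φ : CFm A} : Conly φ → LaltCp φ
  | neg {φ : CFm A} : LaltCp φ → LaltCp (.neg φ)
  | and {φ ψ : CFm A} : LaltCp φ → LaltCp ψ → LaltCp (.and φ ψ)

/-- The fragments C_{-a}: L_{-a} extended with the clause Cφ. -/
inductive CMinus {A : Type} : A → CFm A → Prop
  | atom (a : A) (n : ℕ) : CMinus a (.atom n)
  | box {a x : A} {ψ : CFm A} : x ≠ a → CMinus x ψ → CMinus a (.box x ψ)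
  | neg {a : A} {φ : CFm A} : CMinus a φ → CMinus a (.neg φ)
  | and {a : A} {φ ψ : CFm A} : CMinus a φ → CMinus a ψ → CMinus a (.and φ ψ)
  | cb {a : A} {φ : CFm A} : CMinus a φ → CMinus a (.cb φ)

/-- The fragment C_alt: L_alt extended with the clause Cφ. -/
inductive CAlt {A : Type} : CFm A → Prop
  | atom (n : ℕ) : CAlt (.atom n)
  | chi {φ : CFm A} (a : A) : CMinus a φ → CAlt φ
  | neg {φ : CFm A} : CAlt φ → CAlt (.neg φ)
  | and {φ ψ : CFm A} : CAlt φ → CAlt ψ → CAlt (.and φ ψ)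
  | cb {φ : CFm A} : CAlt φ → CAlt (.cb φ)

/-- Validity on all frames whose relations satisfy P. -/
def CValidOn {A : Type} (P : ∀ {W : Type}, (W → W → Prop) → Prop) (φ : CFm A) : Prop :=
  ∀ (W : Type) (M : Kripke A W), (∀ a : A, P (M.R a)) → ∀ w : W, CSat M w φ

/-- (◇_a p ∧ ◇_a ¬p) → Ĉ(p ∧ Ĉ¬p) is valid on Euclidean frames but not on
serial frames; hence CK5 ∩ L_altC^p ⊄ CKD ∩ L_altC^p. -/
theorem stmt12 {A : Type} (hA : ∃ x y : A, x ≠ y) (a : A) :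
    CValidOn (fun {W} (R : W → W → Prop) => Eucl R)
      (CFm.imp (.and (CFm.dia a (.atom 0)) (CFm.dia a (.neg (.atom 0))))
        (CFm.cdual (.and (.atom 0) (CFm.cdual (.neg (.atom 0)))))) ∧
    ¬ CValidOn (fun {W} (R : W → W → Prop) => Ser R)
      (CFm.imp (.and (CFm.dia a (.atom 0)) (CFm.dia a (.neg (.atom 0))))
        (CFm.cdual (.and (.atom 0) (CFm.cdual (.neg (.atom 0)))))) ∧
    ∃ χ : CFm A, LaltCp χ ∧
      CValidOn (fun {W} (R : W → W → Prop) => Eucl R) χ ∧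
      ¬ CValidOn (fun {W} (R : W → W → Prop) => Ser R) χ := by
  classical
  have main1 : CValidOn (fun {W} (R : W → W → Prop) => Eucl R)
      (CFm.imp (.and (CFm.dia a (.atom 0)) (CFm.dia a (.neg (.atom 0))))
        (CFm.cdual (.and (.atom 0) (CFm.cdual (.neg (.atom 0)))))) := by
    intro W M hE w h
    simp only [CFm.imp, CFm.dia, CFm.cdual, CSat] at h
    obtain ⟨⟨h1, h2⟩, h3⟩ := h
    rw [not_not] at h3
    push_neg at h1 h2
    obtain ⟨v, hv, hpv⟩ := h1
    obtain ⟨u, hu, hpu⟩ := h2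
    have hthis := h3 v (Relation.TransGen.single ⟨a, hv⟩)
    exact hthis ⟨hpv, fun hall =>
      (hall u (Relation.TransGen.single ⟨a, hE a w v u hv hu⟩)) hpu⟩
  have main2 : ¬ CValidOn (fun {W} (R : W → W → Prop) => Ser R)
      (CFm.imp (.and (CFm.dia a (.atom 0)) (CFm.dia a (.neg (.atom 0))))
        (CFm.cdual (.and (.atom 0) (CFm.cdual (.neg (.atom 0)))))) := by
    intro hval
    set M : Kripke A (Fin 3) := ⟨fun _ x y => (x = 0 ∧ (y = 1 ∨ y = 2)) ∨ (x = 1 ∧ y = 1) ∨ (x = 2 ∧ y = 2), fun n w => n = 0 ∧ w = 2⟩ with hM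
    have hser : ∀ b : A, Ser (M.R b) := by
      intro b u
      fin_cases u
      · exact ⟨1, Or.inl ⟨rfl, Or.inl rfl⟩⟩
      · exact ⟨1, Or.inr (Or.inl ⟨rfl, rfl⟩)⟩
      · exact ⟨2, Or.inr (Or.inr ⟨rfl, rfl⟩)⟩
    have step : ∀ x y : Fin 3, (∃ b : A, M.R b x y) → M.R a x y := by
      rintro x y ⟨b, hb⟩; exact hb
    have reach : ∀ x y : Fin 3,
        Relation.TransGen (fun x y => ∃ b : A, M.R b x y) x y → M.R a x y := by
      intro x y hxy
      induction hxy with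
      | single h => exact step _ _ h
      | tail _ h ih =>
        rcases step _ _ h with h' | h' | h'
        · rcases ih with ⟨_, _⟩ | ⟨_, h2⟩ | ⟨_, h2⟩ <;> simp_all [hM]
        · rcases ih with ⟨h1, h2⟩ | ⟨h1, _⟩ | ⟨h1, _⟩ <;> simp_all [hM]
        · rcases ih with ⟨h1, h2⟩ | ⟨h1, _⟩ | ⟨h1, _⟩ <;> simp_all [hM]
    have hbad := hval (Fin 3) M hser 0
    simp only [CFm.imp, CFm.dia, CFm.cdual, CSat] at hbad
    apply hbad
    refine ⟨⟨?_, ?_⟩, ?_⟩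
    · intro hbox
      exact hbox 2 (Or.inl ⟨by trivial, Or.inr (by trivial)⟩) ⟨by trivial, by trivial⟩
    · intro hbox
      refine hbox 1 (Or.inl ⟨by trivial, Or.inl (by trivial)⟩) (fun hp => ?_)
      have h12 : (1 : Fin 3) = 2 := hp.2
      exact absurd h12 (by decide)
    · rw [not_not]
      intro v hv hX
      obtain ⟨hpv, hcd⟩ := hX
      have hv2 : v = 2 := hpv.2
      subst hv2
      apply hcd
      intro u hu hnu
      rcases reach _ _ hu with ⟨h1, _⟩ | ⟨h1, _⟩ | ⟨_, h2⟩
      · exact absurd h1 (by decide)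
      · exact absurd h1 (by decide)
      · exact hnu ⟨by trivial, h2⟩
  refine ⟨main1, main2, _, ?_, main1, main2⟩
  obtain ⟨x, y, hxy⟩ := hA
  have hb : ∃ b : A, b ≠ a := by
    by_cases hx : x = a
    · exact ⟨y, by rw [← hx]; exact hxy.symm⟩
    · exact ⟨x, hx⟩
  obtain ⟨b, hb⟩ := hb
  apply LaltCp.neg
  apply LaltCp.and
  · apply LaltCp.alt
    apply PLAlt.and
    · exact PLAlt.neg (PLAlt.chi b
        (PLMinus.box (Ne.symm hb) (PLMinus.neg (PLMinus.atom a 0))))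
    · exact PLAlt.neg (PLAlt.chi b
        (PLMinus.box (Ne.symm hb) (PLMinus.neg (PLMinus.neg (PLMinus.atom a 0)))))
  · apply LaltCp.neg
    apply LaltCp.conly
    exact Conly.neg (Conly.cb (Conly.neg (Conly.and (Conly.atom 0)
      (Conly.neg (Conly.cb (Conly.neg (Conly.neg (Conly.atom 0))))))))
end

section
/- Let A be a finite set of agents and a ∈ A. The formula (⋀_{x ∈ A\{a}} (□_x ⊥ ∧ □_a □_x ⊥) ∧ □_a p) → Cp is valid on all frames where every accessibility relation is transitive, but is not valid on all Kripke frames. Hence CK4 ∩ L_altC^p is not contained in CK ∩ L_altC^p. -/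
/-! If every agent other than `a` is blind at `w` and at all `a`-successors of `w`, any path
from `w` along the union of the relations can only use `a`-edges; when `R a` is transitive
it collapses to a single `a`-edge, so `□_a p` yields `Cp`. Without transitivity the
`a`-chain `0 → 1 → 2 → ⋯` on `ℕ` with `p` true only at `1` refutes the formula. -/

namespace CFm

variable {A : Type}

noncomputable def othersBlind [Fintype A] [DecidableEq A] (a : A) : CFm A :=
  conj ((Finset.univ.erase a).toList.map fun x => and (box x bot) (box a (box x bot)))

noncomputable def soleBelieverC [Fintype A] [DecidableEq A] (a : A) : CFm A :=
  imp (and (othersBlind a) (box a (atom 0))) (cb (atom 0))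

end CFm

section Semantics

variable {A W : Type} (M : Kripke A W) (w : W)

lemma not_csat_bot : ¬ CSat M w CFm.bot := fun h => h.2 h.1

lemma csat_imp (φ ψ : CFm A) : CSat M w (φ.imp ψ) ↔ (CSat M w φ → CSat M w ψ) := by
  simp only [CFm.imp, CSat, not_and, not_not]

lemma csat_conj (l : List (CFm A)) : CSat M w (CFm.conj l) ↔ ∀ φ ∈ l, CSat M w φ := by
  induction l with
  | nil => simpa [CFm.conj, CFm.verum, CSat] using not_csat_bot M w
  | cons φ l ih => simp only [CFm.conj, List.foldr, CSat, List.forall_mem_cons] at ih ⊢; rw [ih]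

lemma csat_othersBlind [Fintype A] [DecidableEq A] (a : A) :
    CSat M w (CFm.othersBlind a) ↔
      ∀ x ≠ a, (∀ v, ¬ M.R x w v) ∧ ∀ v, M.R a w v → ∀ u, ¬ M.R x v u := by
  simp only [CFm.othersBlind, csat_conj, List.forall_mem_map, Finset.mem_toList,
    Finset.mem_erase, Finset.mem_univ, and_true, CSat, not_csat_bot, imp_false]

end Semantics

lemma Relation.TransGen.of_others_blind {A W : Type} {R : A → W → W → Prop} {a : A}
    (htrans : Transitive (R a)) {w : W}
    (hblind : ∀ x ≠ a, (∀ v, ¬ R x w v) ∧ ∀ v, R a w v → ∀ u, ¬ R x v u) {v : W}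
    (hv : Relation.TransGen (fun s t => ∃ x, R x s t) w v) : R a w v := by
  induction hv with
  | single hstep =>
    obtain ⟨x, hx⟩ := hstep
    by_cases hxa : x = a
    · exact hxa ▸ hx
    · exact absurd hx ((hblind x hxa).1 _)
  | tail _ hstep ih =>
    obtain ⟨x, hx⟩ := hstep
    by_cases hxa : x = a
    · exact htrans ih (hxa ▸ hx)
    · exact absurd hx ((hblind x hxa).2 _ ih _)

lemma PLMinus.bot {A : Type} (a : A) : PLMinus a (CFm.bot (A := A)) :=
  .and (.atom a 0) (.neg (.atom a 0))

lemma PLAlt.conj {A : Type} {l : List (CFm A)} (h : ∀ φ ∈ l, PLAlt φ) : PLAlt (CFm.conj l) := by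
  induction l with
  | nil => exact .neg (.and (.atom 0) (.neg (.atom 0)))
  | cons φ l ih =>
    rw [List.forall_mem_cons] at h
    exact .and h.1 (ih h.2)

section SoleBeliever

variable {A : Type} [Fintype A] [DecidableEq A]

lemma soleBelieverC_valid_transitive (a : A) :
    CValidOn (fun {W} (R : W → W → Prop) => Transitive R) (CFm.soleBelieverC a) := by
  intro W M htrans w
  rw [CFm.soleBelieverC, csat_imp]
  rintro ⟨hblind, hbox⟩ v hv
  exact hbox v (hv.of_others_blind (htrans a) ((csat_othersBlind M w a).1 hblind))

def aChain (a : A) : Kripke A ℕ where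
  R x u v := x = a ∧ v = u + 1
  V _ v := v = 1

lemma soleBelieverC_not_valid (a : A) :
    ¬ CValidOn (fun {W} (_ : W → W → Prop) => True) (CFm.soleBelieverC a) := by
  intro hvalid
  have h0 := hvalid ℕ (aChain a) (fun _ => trivial) 0
  rw [CFm.soleBelieverC, csat_imp, CSat, csat_othersBlind] at h0
  have hblind : ∀ x ≠ a, (∀ v, ¬ (aChain a).R x 0 v) ∧
      ∀ v, (aChain a).R a 0 v → ∀ u, ¬ (aChain a).R x v u :=
    fun x hx => ⟨fun _ h => hx h.1, fun _ _ _ h => hx h.1⟩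
  have hbox : CSat (aChain a) 0 (.box a (.atom 0)) := by
    rintro v ⟨-, rfl⟩
    rfl
  have hpath : Relation.TransGen (fun s t => ∃ x, (aChain a).R x s t) 0 2 :=
    .tail (.single ⟨a, rfl, rfl⟩) ⟨a, rfl, rfl⟩
  have : (2 : ℕ) = 1 := h0 ⟨hblind, hbox⟩ 2 hpath
  omega

/-- `□_a ψ` is agent-alternating only as a member of `L_{-b}` for some `b ≠ a`. -/
lemma laltCp_soleBelieverC {a b : A} (hb : b ≠ a) : LaltCp (CFm.soleBelieverC a) := by
  have hblind : PLAlt (CFm.othersBlind a) := by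
    refine PLAlt.conj (List.forall_mem_map.2 fun x hx => ?_)
    have hxa : x ≠ a := (Finset.mem_erase.1 (Finset.mem_toList.1 hx)).1
    exact .and (.chi a (.box hxa (.bot x))) (.chi b (.box hb.symm (.box hxa (.bot x))))
  have hbox : PLAlt (CFm.box a (.atom 0)) := .chi b (.box hb.symm (.atom a 0))
  exact .neg (.and (.and (.alt hblind) (.alt hbox)) (.neg (.conly (.cb (.atom 0)))))

end SoleBeliever

/-- the formula (⋀_{x≠a}(□_x ⊥ ∧ □_a□_x ⊥) ∧ □_a p) → Cp is valid on transitive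
frames but not on all frames; hence CK4 ∩ L_altC^p ⊄ CK ∩ L_altC^p. -/
theorem stmt14 {A : Type} [Fintype A] [DecidableEq A] (hA : ∃ x y : A, x ≠ y) (a : A) :
    CValidOn (fun {W} (R : W → W → Prop) => Transitive R)
      (CFm.imp
        (.and
          (CFm.conj ((Finset.univ.erase a).toList.map fun x =>
            CFm.and (.box x CFm.bot) (.box a (.box x CFm.bot))))
          (.box a (.atom 0)))
        (.cb (.atom 0))) ∧
    ¬ CValidOn (fun {W} (R : W → W → Prop) => True)
      (CFm.imp
        (.and
          (CFm.conj ((Finset.univ.erase a).toList.map fun x =>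
            CFm.and (.box x CFm.bot) (.box a (.box x CFm.bot))))
          (.box a (.atom 0)))
        (.cb (.atom 0))) ∧
    ∃ χ : CFm A, LaltCp χ ∧
      CValidOn (fun {W} (R : W → W → Prop) => Transitive R) χ ∧
      ¬ CValidOn (fun {W} (R : W → W → Prop) => True) χ := by
  obtain ⟨b, hb⟩ : ∃ b, b ≠ a := by
    obtain ⟨x, y, hxy⟩ := hA
    by_cases hx : x = a
    · exact ⟨y, hx ▸ hxy.symm⟩
    · exact ⟨x, hx⟩
  exact ⟨soleBelieverC_valid_transitive a, soleBelieverC_not_valid a,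
    CFm.soleBelieverC a, laltCp_soleBelieverC hb,
    soleBelieverC_valid_transitive a, soleBelieverC_not_valid a⟩
end

section
/- For all n ∈ ℕ and pointed Kripke models M,u and N,v all of whose accessibility relations are transitive and Euclidean, M,u and N,v are n-bisimilar (in the standard sense) if and only if M,u ⇆_alt^n N,v, where ⇆_alt^n is the finite agent-alternating bisimulation relation. -/
lemma bisimN_mono {A W1 W2 : Type} (M : Kripke A W1) (N : Kripke A W2) :
    ∀ (n : ℕ) (o : Option A) (u : W1) (v : W2),
      BisimN M N (n+1) o u v → BisimN M N n o u v := by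
  intro n
  induction n with
  | zero => intro o u v h; exact h.1
  | succ n ih =>
    intro o u v h
    refine ⟨h.1, fun b hb => ?_⟩
    obtain ⟨h1, h2⟩ := h.2 b hb
    constructor
    · intro u' hu'; obtain ⟨v', hv', hb'⟩ := h1 u' hu'; exact ⟨v', hv', ih _ _ _ hb'⟩
    · intro v' hv'; obtain ⟨u', hu', hb'⟩ := h2 v' hv'; exact ⟨u', hu', ih _ _ _ hb'⟩

lemma std_to_alt {A W1 W2 : Type} (M : Kripke A W1) (N : Kripke A W2) :
    ∀ (n : ℕ) (o : Option A) (u : W1) (v : W2),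
      StdBisimN M N n u v → BisimN M N n o u v := by
  intro n
  induction n with
  | zero => intro o u v h; exact h
  | succ n ih =>
    intro o u v h
    refine ⟨h.1, fun b _ => ?_⟩
    obtain ⟨h1, h2⟩ := h.2 b
    constructor
    · intro u' hu'; obtain ⟨v', hv', hb'⟩ := h1 u' hu'; exact ⟨v', hv', ih _ _ _ hb'⟩
    · intro v' hv'; obtain ⟨u', hu', hb'⟩ := h2 v' hv'; exact ⟨u', hu', ih _ _ _ hb'⟩

lemma alt_helper {A W1 W2 : Type} (M : Kripke A W1) (N : Kripke A W2)
    (hM : ∀ a : A, Transitive (M.R a) ∧ Eucl (M.R a))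
    (hN : ∀ a : A, Transitive (N.R a) ∧ Eucl (N.R a)) :
    ∀ (n : ℕ) (o : Option A) (b : A) (u : W1) (v : W2) (u' : W1) (v' : W2),
      o ≠ some b → BisimN M N (n+1) o u v → M.R b u u' → N.R b v v' →
      BisimN M N n (some b) u' v' → BisimN M N n none u' v' := by
  intro n o b u v u' v' hob hp hu hv hc
  cases n with
  | zero => exact hc
  | succ n =>
    refine ⟨hc.1, fun c _ => ?_⟩
    by_cases hcb : c = b
    · subst hcb
      constructor
      · intro u'' hu''
        obtain ⟨v'', hv'', hb''⟩ := (hp.2 c hob).1 u'' ((hM c).1 hu hu'')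
        exact ⟨v'', (hN c).2 _ _ _ hv hv'', bisimN_mono M N _ _ _ _ hb''⟩
      · intro v'' hv''
        obtain ⟨u'', hu'', hb''⟩ := (hp.2 c hob).2 v'' ((hN c).1 hv hv'')
        exact ⟨u'', (hM c).2 _ _ _ hu hu'', bisimN_mono M N _ _ _ _ hb''⟩
    · exact hc.2 c (by simpa using fun h => hcb h.symm)

/-- over transitive Euclidean models, standard n-bisimilarity coincides with
finite agent-alternating n-bisimilarity. -/
theorem stmt15 {A W1 W2 : Type} (hA : ∃ a b : A, a ≠ b)
    (M : Kripke A W1) (N : Kripke A W2)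
    (hM : ∀ a : A, Transitive (M.R a) ∧ Eucl (M.R a))
    (hN : ∀ a : A, Transitive (N.R a) ∧ Eucl (N.R a))
    (n : ℕ) (u : W1) (v : W2) :
    StdBisimN M N n u v ↔ BisimN M N n none u v := by
  constructor
  · exact fun h => std_to_alt M N n none u v h
  · induction n generalizing u v with
    | zero => exact fun h => h
    | succ n ih =>
      intro h
      refine ⟨h.1, fun b => ?_⟩
      obtain ⟨h1, h2⟩ := h.2 b (by simp)
      constructor
      · intro u' hu'
        obtain ⟨v', hv', hb⟩ := h1 u' hu'
        exact ⟨v', hv', ih u' v' (alt_helper M N hM hN n none b u v u' v' (by simp) h hu' hv' hb)⟩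
      · intro v' hv'
        obtain ⟨u', hu', hb⟩ := h2 v' hv'
        exact ⟨u', hu', ih u' v' (alt_helper M N hM hN n none b u v u' v' (by simp) h hu' hv' hb)⟩
end

section
/- There exist two pointed Kripke models, both with all accessibility relations serial and Euclidean, that are agent-alternating ω-bisimilar but not 2-bisimilar; the formula ◇_a ◇_a p distinguishes them. Hence the agent-alternating fragment is strictly less expressive than the full language over KD5 models. -/
def raM : Fin 3 → Fin 3 → Bool
  | 0, w => w == 1
  | _, w => w != 0

def raN : Fin 5 → Fin 5 → Bool
  | 0, w => w == 1
  | 1, w => w == 1 || w == 2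
  | 2, w => w == 1 || w == 2
  | 3, w => w == 4
  | 4, w => w == 4

def rbN : Fin 5 → Fin 5 → Bool
  | 4, w => w == 1
  | u, w => w == u

def MW {A : Type} (a : A) : Kripke A (Fin 3) where
  R x u w := (x = a ∧ raM u w = true) ∨ (x ≠ a ∧ u = w)
  V n u := n = 0 ∧ u = 2

def NW {A : Type} (a : A) : Kripke A (Fin 5) where
  R x u w := (x = a ∧ raN u w = true) ∨ (x ≠ a ∧ rbN u w = true)
  V n u := n = 0 ∧ u = 2

def emb : Fin 3 → Fin 5 := fun w => ⟨w.1, by omega⟩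

def InvFam {A : Type} (a : A) : Option A → Fin 3 → Fin 5 → Prop :=
  fun o u v => (v = emb u) ∨ (u = 0 ∧ v = 3) ∨ (o = some a ∧ u = 1 ∧ v = 4)

lemma inv_atoms {A : Type} (a : A) {o : Option A} {u : Fin 3} {v : Fin 5}
    (h : InvFam a o u v) : ∀ n, (MW a).V n u ↔ (NW a).V n v := by
  intro n
  rcases h with h | ⟨h1, h2⟩ | ⟨_, h1, h2⟩
  · subst h
    constructor
    · rintro ⟨hn, hu⟩; exact ⟨hn, by subst hu; rfl⟩
    · rintro ⟨hn, hu⟩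
      refine ⟨hn, ?_⟩
      revert hu
      match u with
      | (0 : Fin 3) => decide
      | (1 : Fin 3) => decide
      | (2 : Fin 3) => decide
  · subst h1; subst h2
    constructor
    · rintro ⟨_, h⟩; exact absurd h (by decide)
    · rintro ⟨_, h⟩; exact absurd h (by decide)
  · subst h1; subst h2
    constructor
    · rintro ⟨_, h⟩; exact absurd h (by decide)
    · rintro ⟨_, h⟩; exact absurd h (by decide)

lemma inv_bisim {A : Type} (a : A) :
    ∀ (n : ℕ) (o : Option A) (u : Fin 3) (v : Fin 5),
      InvFam a o u v → BisimN (MW a) (NW a) n o u v := by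
  intro n
  induction n with
  | zero => intro o u v h; exact inv_atoms a h
  | succ n ih =>
    intro o u v h
    refine ⟨inv_atoms a h, ?_⟩
    intro x hox
    rcases h with h | ⟨h1, h2⟩ | ⟨ho, h1, h2⟩
    · -- v = emb u
      subst h
      by_cases hx : x = a
      · subst hx
        constructor
        · rintro u' (⟨_, hr⟩ | ⟨hne, _⟩)
          · refine ⟨emb u', Or.inl ⟨rfl, ?_⟩, ih _ _ _ (Or.inl rfl)⟩
            revert hr
            have : ∀ u u' : Fin 3, raM u u' = true → raN (emb u) (emb u') = true := by decide
            exact this u u'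
          · exact absurd rfl hne
        · rintro v' (⟨_, hr⟩ | ⟨hne, _⟩)
          · have key : ∀ (u : Fin 3) (v' : Fin 5), raN (emb u) v' = true →
                ∃ u' : Fin 3, raM u u' = true ∧ v' = emb u' := by decide
            obtain ⟨u', hu', hv'⟩ := key u v' hr
            exact ⟨u', Or.inl ⟨rfl, hu'⟩, hv' ▸ ih _ _ _ (Or.inl rfl)⟩
          · exact absurd rfl hne
      · constructor
        · rintro u' (⟨hxa, _⟩ | ⟨_, hu'⟩)
          · exact absurd hxa hx
          · subst hu'
            have key : ∀ w : Fin 3, rbN (emb w) (emb w) = true := by decide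
            exact ⟨emb u, Or.inr ⟨hx, key u⟩, ih _ _ _ (Or.inl rfl)⟩
        · rintro v' (⟨hxa, _⟩ | ⟨_, hr⟩)
          · exact absurd hxa hx
          · have key : ∀ (u : Fin 3) (v' : Fin 5), rbN (emb u) v' = true → v' = emb u := by decide
            have hv' := key u v' hr
            subst hv'
            exact ⟨u, Or.inr ⟨hx, rfl⟩, ih _ _ _ (Or.inl rfl)⟩
    · -- u = 0, v = 3
      subst h1; subst h2
      by_cases hx : x = a
      · subst hx
        constructor
        · rintro u' (⟨_, hr⟩ | ⟨hne, _⟩)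
          · have key : ∀ u' : Fin 3, raM 0 u' = true → u' = 1 := by decide
            have hu' := key u' hr
            subst hu'
            exact ⟨4, Or.inl ⟨rfl, by decide⟩, ih _ _ _ (Or.inr (Or.inr ⟨rfl, rfl, rfl⟩))⟩
          · exact absurd rfl hne
        · rintro v' (⟨_, hr⟩ | ⟨hne, _⟩)
          · have key : ∀ v' : Fin 5, raN 3 v' = true → v' = 4 := by decide
            have hv' := key v' hr
            subst hv'
            exact ⟨1, Or.inl ⟨rfl, by decide⟩, ih _ _ _ (Or.inr (Or.inr ⟨rfl, rfl, rfl⟩))⟩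
          · exact absurd rfl hne
      · constructor
        · rintro u' (⟨hxa, _⟩ | ⟨_, hu'⟩)
          · exact absurd hxa hx
          · subst hu'
            exact ⟨3, Or.inr ⟨hx, by decide⟩, ih _ _ _ (Or.inr (Or.inl ⟨rfl, rfl⟩))⟩
        · rintro v' (⟨hxa, _⟩ | ⟨_, hr⟩)
          · exact absurd hxa hx
          · have key : ∀ v' : Fin 5, rbN 3 v' = true → v' = 3 := by decide
            have hv' := key v' hr
            subst hv'
            exact ⟨0, Or.inr ⟨hx, rfl⟩, ih _ _ _ (Or.inr (Or.inl ⟨rfl, rfl⟩))⟩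
    · -- o = some a, u = 1, v = 4
      subst ho; subst h1; subst h2
      have hx : x ≠ a := fun h => hox (by rw [h])
      constructor
      · rintro u' (⟨hxa, _⟩ | ⟨_, hu'⟩)
        · exact absurd hxa hx
        · subst hu'
          exact ⟨1, Or.inr ⟨hx, by decide⟩, ih _ _ _ (Or.inl (by decide))⟩
      · rintro v' (⟨hxa, _⟩ | ⟨_, hr⟩)
        · exact absurd hxa hx
        · have key : ∀ v' : Fin 5, rbN 4 v' = true → v' = 1 := by decide
          have hv' := key v' hr
          subst hv'
          exact ⟨1, Or.inr ⟨hx, rfl⟩, ih _ _ _ (Or.inl (by decide))⟩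

/-- over serial Euclidean (KD5) models, agent-alternating ω-bisimilarity does
not imply 2-bisimilarity; ◇_a◇_a p distinguishes the witnessing models. -/
theorem stmt17 {A : Type} (a b : A) (hab : a ≠ b) :
    ∃ (W1 W2 : Type) (M : Kripke A W1) (N : Kripke A W2) (u : W1) (v : W2),
      (∀ x : A, Ser (M.R x) ∧ Eucl (M.R x)) ∧
      (∀ x : A, Ser (N.R x) ∧ Eucl (N.R x)) ∧
      (∀ n : ℕ, BisimN M N n none u v) ∧
      ¬ StdBisimN M N 2 u v ∧
      Sat M u (Fm.dia a (Fm.dia a (.atom 0))) ∧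
      ¬ Sat N v (Fm.dia a (Fm.dia a (.atom 0))) := by
  refine ⟨Fin 3, Fin 5, MW a, NW a, 0, 3, ?_, ?_, ?_, ?_, ?_, ?_⟩
  · -- M serial and Euclidean
    intro x
    constructor
    · intro u
      by_cases hx : x = a
      · exact ⟨1, Or.inl ⟨hx, by revert u; decide⟩⟩
      · exact ⟨u, Or.inr ⟨hx, rfl⟩⟩
    · rintro u v w (⟨hxa, h1⟩ | ⟨hxa, h1⟩) (⟨_, h2⟩ | ⟨hxa', h2⟩)
      · refine Or.inl ⟨hxa, ?_⟩
        have key : ∀ u v w : Fin 3, raM u v = true → raM u w = true → raM v w = true := by decide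
        exact key u v w h1 h2
      · exact absurd hxa hxa'
      · exact absurd ‹x = a› hxa
      · exact Or.inr ⟨hxa, h1 ▸ h2⟩
  · -- N serial and Euclidean
    intro x
    constructor
    · intro u
      by_cases hx : x = a
      · have key : ∀ u : Fin 5, ∃ w, raN u w = true := by decide
        obtain ⟨w, hw⟩ := key u
        exact ⟨w, Or.inl ⟨hx, hw⟩⟩
      · have key : ∀ u : Fin 5, ∃ w, rbN u w = true := by decide
        obtain ⟨w, hw⟩ := key u
        exact ⟨w, Or.inr ⟨hx, hw⟩⟩
    · rintro u v w (⟨hxa, h1⟩ | ⟨hxa, h1⟩) (⟨_, h2⟩ | ⟨hxa', h2⟩)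
      · refine Or.inl ⟨hxa, ?_⟩
        have key : ∀ u v w : Fin 5, raN u v = true → raN u w = true → raN v w = true := by decide
        exact key u v w h1 h2
      · exact absurd hxa hxa'
      · exact absurd ‹x = a› hxa
      · refine Or.inr ⟨hxa, ?_⟩
        have key : ∀ u v w : Fin 5, rbN u v = true → rbN u w = true → rbN v w = true := by decide
        exact key u v w h1 h2
  · -- agent-alternating ω-bisimilarity
    intro n
    exact inv_bisim a n none 0 3 (Or.inr (Or.inl ⟨rfl, rfl⟩))
  · -- not 2-bisimilar
    rintro ⟨_, h1⟩
    obtain ⟨zig1, -⟩ := h1 a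
    obtain ⟨v', hv', hb1⟩ := zig1 1 (Or.inl ⟨rfl, by decide⟩)
    have keyA : ∀ w : Fin 5, raN 3 w = true → w = 4 := by decide
    have hv'4 : v' = 4 := by
      rcases hv' with ⟨_, hr⟩ | ⟨hne, _⟩
      · exact keyA v' hr
      · exact absurd rfl hne
    subst hv'4
    obtain ⟨-, h2⟩ := hb1
    obtain ⟨zig2, -⟩ := h2 a
    obtain ⟨v'', hv'', hb0⟩ := zig2 2 (Or.inl ⟨rfl, by decide⟩)
    have keyB : ∀ w : Fin 5, raN 4 w = true → w = 4 := by decide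
    have hv''4 : v'' = 4 := by
      rcases hv'' with ⟨_, hr⟩ | ⟨hne, _⟩
      · exact keyB v'' hr
      · exact absurd rfl hne
    subst hv''4
    have := (hb0 0).mp ⟨rfl, rfl⟩
    exact absurd this.2 (by decide)
  · -- Sat M 0 (◇a ◇a p)
    simp only [Fm.dia, Sat]
    intro h
    apply h 1 (Or.inl ⟨rfl, by decide⟩)
    intro h2
    exact h2 2 (Or.inl ⟨rfl, by decide⟩) ⟨rfl, rfl⟩
  · -- ¬ Sat N 3 (◇a ◇a p)
    simp only [Fm.dia, Sat]
    intro h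
    apply h
    intro v' hv' hnn
    have keyA : ∀ w : Fin 5, raN 3 w = true → w = 4 := by decide
    have hv'4 : v' = 4 := by
      rcases hv' with ⟨_, hr⟩ | ⟨hne, _⟩
      · exact keyA v' hr
      · exact absurd rfl hne
    subst hv'4
    apply hnn
    intro w hw hp
    have keyB : ∀ w : Fin 5, raN 4 w = true → w = 4 := by decide
    have hw4 : w = 4 := by
      rcases hw with ⟨_, hr⟩ | ⟨hne, _⟩
      · exact keyB w hr
      · exact absurd rfl hne
    subst hw4
    exact absurd hp.2 (by decide)
end
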